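/- Let n be a positive integer, α ∈ (1/2, 1), and Λ₁, …, Λₙ > 0. Let e : [0, ∞) → ℝⁿ be differentiable with e_i′(t) = −Λ_i |e_i(t)|^α sign(e_i(t)) for each i = 1, …, n and all t ≥ 0. Then each component satisfies e_i(t) = 0 for all t ≥ t_{f,i} := Λ_i⁻¹ (1−α)⁻¹ |e_i(0)|^{1−α}; consequently e(t) = 0 for all t ≥ max_{1 ≤ i ≤ n} t_{f,i}. -/

import Mathlib

/-!
Along a solution of `ẋ = -λ |x|^α sign x` with `λ > 0`, the product `x ẋ` is nonpositive, so `|x|`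
is nonincreasing. Away from zero, `V = |x|^(1-α)` satisfies `V̇ = -(1-α)λ`. If `x` had not vanished
by `T = λ⁻¹(1-α)⁻¹|x 0|^(1-α)`, then `V T = V 0 - (1-α)λT = 0`, a contradiction; once `x` is zero
it stays zero. The components of `ė = -Λ sign^α(e)` decouple, so each vanishes after its own `T`.
-/

open Set

theorem Real.sign_mul_self_of_ne_zero {r : ℝ} (hr : r ≠ 0) : Real.sign r * Real.sign r = 1 := by
  rcases Real.sign_apply_eq_of_ne_zero r hr with h | h <;> rw [h] <;> norm_num

theorem HasDerivAt.abs_of_ne_zero {x : ℝ → ℝ} {d t : ℝ} (hx : HasDerivAt x d t)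
    (h : x t ≠ 0) : HasDerivAt (fun s => |x s|) (Real.sign (x t) * d) t := by
  rcases h.lt_or_gt with h | h
  · rw [Real.sign_of_neg h, neg_one_mul]
    simpa using (hx.hasFDerivAt.abs_of_neg h).hasDerivAt
  · rw [Real.sign_of_pos h, one_mul]
    simpa using (hx.hasFDerivAt.abs_of_pos h).hasDerivAt

theorem antitoneOn_abs_of_mul_deriv_nonpos {x x' : ℝ → ℝ} {D : Set ℝ} (hD : Convex ℝ D)
    (hx : ∀ t ∈ D, HasDerivAt x (x' t) t) (hxx' : ∀ t ∈ D, x t * x' t ≤ 0) :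
    AntitoneOn (fun t => |x t|) D := by
  have hsq : AntitoneOn (fun t => x t ^ 2) D := by
    refine antitoneOn_of_hasDerivWithinAt_nonpos hD
      (fun t ht => ((hx t ht).continuousAt.pow 2).continuousWithinAt)
      (fun t ht => ((hx t (interior_subset ht)).pow 2).hasDerivWithinAt) fun t ht => ?_
    have := hxx' t (interior_subset ht)
    simp only [Nat.cast_ofNat, Nat.add_one_sub_one, pow_one]
    linarith
  exact fun s hs t ht hst => sq_le_sq.mp (hsq hs ht hst)

section TerminalAttractor

variable {α lam : ℝ} {x : ℝ → ℝ}

theorem abs_antitoneOn_of_terminal (hlam : 0 ≤ lam)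
    (hode : ∀ t ∈ Ici (0 : ℝ), HasDerivAt x (-lam * |x t| ^ α * Real.sign (x t)) t) :
    AntitoneOn (fun t => |x t|) (Ici 0) := by
  refine antitoneOn_abs_of_mul_deriv_nonpos (convex_Ici 0) hode fun t _ => ?_
  have h : x t * (-lam * |x t| ^ α * Real.sign (x t)) =
      -(lam * |x t| ^ α * (Real.sign (x t) * x t)) := by ring
  rw [h, neg_nonpos]
  have := Real.sign_mul_nonneg (x t)
  positivity

theorem hasDerivAt_abs_rpow_one_sub_of_terminal {t : ℝ}
    (hx : HasDerivAt x (-lam * |x t| ^ α * Real.sign (x t)) t) (h : x t ≠ 0) :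
    HasDerivAt (fun s => |x s| ^ (1 - α)) (-((1 - α) * lam)) t := by
  convert (hx.abs_of_ne_zero h).rpow_const (p := 1 - α) (Or.inl (abs_ne_zero.mpr h)) using 1
  have hpos : 0 < |x t| ^ α := Real.rpow_pos_of_pos (abs_pos.mpr h) α
  rw [sub_sub_cancel_left, Real.rpow_neg (abs_nonneg _)]
  field_simp
  rw [sq, Real.sign_mul_self_of_ne_zero h, mul_one]

theorem abs_rpow_one_sub_eq_of_terminal {a b : ℝ} (hab : a ≤ b)
    (hode : ∀ t ∈ Icc a b, HasDerivAt x (-lam * |x t| ^ α * Real.sign (x t)) t)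
    (hne : ∀ t ∈ Icc a b, x t ≠ 0) :
    |x b| ^ (1 - α) = |x a| ^ (1 - α) - (1 - α) * lam * (b - a) := by
  have hG t (ht : t ∈ Icc a b) := hasDerivAt_abs_rpow_one_sub_of_terminal (hode t ht) (hne t ht)
  have haff t : HasDerivAt (fun s => |x a| ^ (1 - α) - (1 - α) * lam * (s - a))
      (-((1 - α) * lam)) t := by
    simpa using ((hasDerivAt_id t).sub_const a).const_mul ((1 - α) * lam) |>.const_sub _
  refine eq_of_has_deriv_right_eq
    (fun t ht => (hG t (Ico_subset_Icc_self ht)).hasDerivWithinAt)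
    (fun t _ => (haff t).hasDerivWithinAt)
    (fun t ht => (hG t ht).continuousAt.continuousWithinAt) (by fun_prop) (by simp)
    b ⟨hab, le_rfl⟩

theorem eq_zero_of_terminal_reaching_time_le (hα : α < 1) (hlam : 0 < lam)
    (hode : ∀ t, 0 ≤ t → HasDerivAt x (-lam * |x t| ^ α * Real.sign (x t)) t) {t : ℝ}
    (ht : lam⁻¹ * (1 - α)⁻¹ * |x 0| ^ (1 - α) ≤ t) : x t = 0 := by
  set T := lam⁻¹ * (1 - α)⁻¹ * |x 0| ^ (1 - α)
  have h1α : 0 < 1 - α := sub_pos.mpr hα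
  have hT : 0 ≤ T := by positivity
  have hanti := abs_antitoneOn_of_terminal hlam.le hode
  have hxT : x T = 0 := by
    by_contra hxT
    have hne : ∀ s ∈ Icc 0 T, x s ≠ 0 := fun s hs hs0 =>
      hxT (abs_nonpos_iff.mp ((hanti hs.1 hT hs.2).trans_eq (by simp [hs0])))
    have hdecay := abs_rpow_one_sub_eq_of_terminal hT (fun s hs => hode s hs.1) hne
    have hreach : (1 - α) * lam * T = |x 0| ^ (1 - α) := by
      unfold T; field_simp
    rw [sub_zero, hreach, sub_self, Real.rpow_eq_zero (abs_nonneg _) h1α.ne', abs_eq_zero] at hdecay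
    exact hxT hdecay
  exact abs_nonpos_iff.mp ((hanti hT (hT.trans ht) ht).trans_eq (by simp [hxT]))

end TerminalAttractor

/-- Componentwise finite-time convergence of the decoupled terminal sliding
dynamics `ė = −Λ sign^α(e)` with `Λ = diag(Λ₁,…,Λₙ)`, `Λᵢ > 0`: each component
vanishes after its own reaching time `t_{f,i} = Λᵢ⁻¹(1−α)⁻¹|eᵢ(0)|^{1−α}`, and
the whole error vector vanishes after the largest of these times. -/
theorem terminal_sliding_componentwise_finite_time
    (n : ℕ) (hn : 0 < n)
    (α : ℝ) (hα : α ∈ Set.Ioo (1 / 2 : ℝ) 1)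
    (Λ : Fin n → ℝ) (hΛ : ∀ i, 0 < Λ i)
    (e : ℝ → Fin n → ℝ)
    (hode : ∀ (i : Fin n) (t : ℝ), 0 ≤ t →
      HasDerivAt (fun s => e s i) (-Λ i * |e t i| ^ α * Real.sign (e t i)) t) :
    (∀ (i : Fin n) (t : ℝ), (Λ i)⁻¹ * (1 - α)⁻¹ * |e 0 i| ^ (1 - α) ≤ t →
      e t i = 0) ∧
    (∀ t : ℝ,
      (Finset.univ.sup' (Finset.univ_nonempty_iff.mpr ⟨⟨0, hn⟩⟩)
        fun i : Fin n => (Λ i)⁻¹ * (1 - α)⁻¹ * |e 0 i| ^ (1 - α)) ≤ t →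
      e t = 0) := by
  have hcomponent (i : Fin n) (t : ℝ) :=
    eq_zero_of_terminal_reaching_time_le (x := fun s => e s i) (t := t) hα.2 (hΛ i) (hode i)
  exact ⟨hcomponent, fun t ht => funext fun i =>
    hcomponent i t ((Finset.le_sup' _ (Finset.mem_univ i)).trans ht)⟩
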